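/- If σ_1, ..., σ_N are independent and identically distributed geometric random variables (with values in {1,2,...} and success probability p), then the random variable N·(min(σ_1,...,σ_N) − 1) + min{ n ∈ {1,...,N} : σ_n = min(σ_1,...,σ_N) } has the same law as σ_1. -/

import Mathlib

/-!
Write `k - 1 = N t + j` with `j < N`. The quantity on the left equals `k` exactly when the
minimum of the `σ i` is `t + 1` and is first attained at index `j`, that is, when
`σ i > t + 1` for `i < j`, `σ j = t + 1` and `σ i ≥ t + 1` for `i > j`. This is a product
event, so by independence and the geometric tail `P(σ ≥ m) = (1 - p)^(m - 1)` its probability is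
`(1 - p)^((t + 1) j) · p (1 - p)^t · (1 - p)^(t (N - 1 - j)) = p (1 - p)^(N t + j) = P(σ 0 = k)`.
-/

open MeasureTheory ProbabilityTheory Finset

theorem prod_range_ite_lt_ite_eq {M : Type*} [CommMonoid M] (a b c : M) (j r : ℕ) :
    ∏ i ∈ range (j + r + 1), (if i < j then a else if i = j then b else c) =
      a ^ j * b * c ^ r := by
  have hlt : ∏ i ∈ range j, (if i < j then a else if i = j then b else c) = a ^ j := by
    rw [prod_congr rfl fun i hi => if_pos (mem_range.1 hi), prod_const, card_range]
  have hgt : ∏ n ∈ range r, (if j + 1 + n < j then a else if j + 1 + n = j then b else c)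
      = c ^ r := by
    rw [prod_congr rfl fun n _ => by rw [if_neg (by omega), if_neg (by omega)], prod_const,
      card_range]
  rw [Nat.add_right_comm, prod_range_add, prod_range_succ, hlt, hgt]
  simp

def minPattern (m j i : ℕ) : Set ℕ :=
  if i < j then Set.Ioi m else if i = j then {m} else Set.Ici m

theorem minPattern_subset_Ici (m j i : ℕ) : minPattern m j i ⊆ Set.Ici m := by
  unfold minPattern
  split_ifs
  exacts [Set.Ioi_subset_Ici_self, by simp, subset_rfl]

section FirstArgmin

variable {N : ℕ} [NeZero N]

noncomputable def firstArgmin (s : Fin N → ℕ) : ℕ :=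
  sInf {n : ℕ | ∃ h : n < N, s ⟨n, h⟩ = univ.inf' univ_nonempty s}

noncomputable def replicaTime (s : Fin N → ℕ) : ℕ :=
  N * (univ.inf' univ_nonempty s - 1) + (1 + firstArgmin s)

theorem firstArgmin_mem (s : Fin N → ℕ) :
    firstArgmin s ∈ {n : ℕ | ∃ h : n < N, s ⟨n, h⟩ = univ.inf' univ_nonempty s} := by
  obtain ⟨i, -, hi⟩ := exists_mem_eq_inf' univ_nonempty s
  exact Nat.sInf_mem ⟨i, i.isLt, hi.symm⟩

theorem firstArgmin_eq_iff {s : Fin N → ℕ} {j : ℕ} (hj : j < N) :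
    firstArgmin s = j ↔ s ⟨j, hj⟩ = univ.inf' univ_nonempty s ∧
      ∀ i : Fin N, (i : ℕ) < j → univ.inf' univ_nonempty s < s i := by
  constructor
  · rintro rfl
    obtain ⟨_, h_min⟩ := firstArgmin_mem s
    exact ⟨h_min, fun i hi => (inf'_le s (mem_univ i)).lt_of_ne fun he =>
      Nat.notMem_of_lt_sInf hi ⟨i.isLt, he.symm⟩⟩
  · rintro ⟨hj_min, h_before⟩
    refine le_antisymm (Nat.sInf_le ⟨hj, hj_min⟩) (not_lt.1 fun hlt => ?_)
    obtain ⟨hN, h_min⟩ := firstArgmin_mem s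
    exact (h_before ⟨_, hN⟩ hlt).ne' h_min

theorem inf'_eq_and_firstArgmin_eq_iff {s : Fin N → ℕ} {m j : ℕ} (hj : j < N) :
    univ.inf' univ_nonempty s = m ∧ firstArgmin s = j ↔
      ∀ i : Fin N, s i ∈ minPattern m j i := by
  rw [firstArgmin_eq_iff hj]
  constructor
  · rintro ⟨rfl, hj_min, h_before⟩ i
    unfold minPattern
    split_ifs with hlt heq
    · exact h_before i hlt
    · rw [show i = ⟨j, hj⟩ from Fin.ext heq, hj_min, Set.mem_singleton_iff]
    · exact inf'_le s (mem_univ i)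
  · intro h
    have hj_eq : s ⟨j, hj⟩ = m := by simpa [minPattern] using h ⟨j, hj⟩
    have hmin : univ.inf' univ_nonempty s = m :=
      le_antisymm (hj_eq ▸ inf'_le s (mem_univ ⟨j, hj⟩))
        (le_inf' _ _ fun i _ => minPattern_subset_Ici m j i (h i))
    refine ⟨hmin, hmin ▸ hj_eq, fun i hi => ?_⟩
    simpa [minPattern, hi, hmin] using h i

theorem replicaTime_eq_succ_iff {s : Fin N → ℕ} (hs : ∀ i, 1 ≤ s i) (k : ℕ) :
    replicaTime s = k + 1 ↔ ∀ i : Fin N, s i ∈ minPattern (k / N + 1) (k % N) i := by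
  have hmin : 1 ≤ univ.inf' univ_nonempty s := le_inf' _ _ fun i _ => hs i
  have hlt : firstArgmin s < N := (firstArgmin_mem s).1
  have hdivmod := Nat.div_mod_unique (a := k) (d := univ.inf' univ_nonempty s - 1)
    (c := firstArgmin s) (NeZero.pos N)
  rw [← inf'_eq_and_firstArgmin_eq_iff (Nat.mod_lt k (NeZero.pos N)), replicaTime]
  omega

end FirstArgmin

section Geometric

variable {Ω : Type*} [MeasurableSpace Ω] {P : Measure Ω} {p : ℝ}

def HasGeometricLaw (P : Measure Ω) (p : ℝ) (f : Ω → ℕ) : Prop :=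
  ∀ k : ℕ, 1 ≤ k → P {ω | f ω = k} = ENNReal.ofReal (p * (1 - p) ^ (k - 1))

theorem HasGeometricLaw.measure_succ_le {f : Ω → ℕ} (hgeom : HasGeometricLaw P p f)
    (hp0 : 0 < p) (hp1 : p ≤ 1) (hf : Measurable f) (t : ℕ) :
    P {ω | t + 1 ≤ f ω} = ENNReal.ofReal ((1 - p) ^ t) := by
  have hq0 : 0 ≤ 1 - p := by linarith
  have hq1 : 1 - p < 1 := by linarith
  have hunion : {ω | t + 1 ≤ f ω} = ⋃ n : ℕ, {ω | f ω = t + 1 + n} := by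
    ext ω
    simp only [Set.mem_ofPred_eq, Set.mem_iUnion]
    exact ⟨fun h => ⟨f ω - (t + 1), by omega⟩, fun ⟨n, hn⟩ => by omega⟩
  have hdisj : Pairwise (Function.onFun Disjoint fun n : ℕ => {ω | f ω = t + 1 + n}) :=
    fun a b hab => Set.disjoint_left.2 fun ω ha hb => hab (by simp_all)
  have hterm (n : ℕ) :
      P {ω | f ω = t + 1 + n} = ENNReal.ofReal (p * (1 - p) ^ t * (1 - p) ^ n) := by
    rw [hgeom _ (by omega), mul_assoc, ← pow_add, Nat.add_right_comm, Nat.add_sub_cancel]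
  rw [hunion, measure_iUnion hdisj fun n => hf (measurableSet_singleton _)]
  simp_rw [hterm]
  rw [← ENNReal.ofReal_tsum_of_nonneg (fun n => by positivity)
      ((summable_geometric_of_lt_one hq0 hq1).mul_left _),
    tsum_mul_left, tsum_geometric_of_lt_one hq0 hq1, sub_sub_cancel, mul_comm p,
    mul_inv_cancel_right₀ hp0.ne']

theorem HasGeometricLaw.measure_preimage_minPattern {f : Ω → ℕ}
    (hgeom : HasGeometricLaw P p f) (hp0 : 0 < p) (hp1 : p ≤ 1) (hf : Measurable f)
    (t j i : ℕ) :
    P (f ⁻¹' minPattern (t + 1) j i) =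
      if i < j then ENNReal.ofReal ((1 - p) ^ (t + 1))
      else if i = j then ENNReal.ofReal (p * (1 - p) ^ t) else ENNReal.ofReal ((1 - p) ^ t) := by
  unfold minPattern
  split_ifs
  · exact hgeom.measure_succ_le hp0 hp1 hf (t + 1)
  · exact hgeom (t + 1) t.succ_pos
  · exact hgeom.measure_succ_le hp0 hp1 hf t

theorem measure_iInter_preimage_minPattern {N : ℕ} {σ : Fin N → Ω → ℕ} (hp0 : 0 < p)
    (hp1 : p ≤ 1) (hmeas : ∀ i, Measurable (σ i)) (hindep : iIndepFun σ P)
    (hgeom : ∀ i, HasGeometricLaw P p (σ i)) {t j : ℕ} (hj : j < N) :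
    P (⋂ i, σ i ⁻¹' minPattern (t + 1) j i) = ENNReal.ofReal (p * (1 - p) ^ (N * t + j)) := by
  obtain ⟨r, rfl⟩ := Nat.exists_eq_add_of_lt hj
  have hq : 0 ≤ 1 - p := by linarith
  rw [hindep.meas_iInter fun i => ⟨_, .of_discrete, rfl⟩]
  simp_rw [(hgeom _).measure_preimage_minPattern hp0 hp1 (hmeas _)]
  rw [Fin.prod_univ_eq_prod_range (fun i => if i < j then ENNReal.ofReal ((1 - p) ^ (t + 1))
      else if i = j then ENNReal.ofReal (p * (1 - p) ^ t) else ENNReal.ofReal ((1 - p) ^ t)),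
    prod_range_ite_lt_ite_eq]
  simp only [ENNReal.ofReal_mul hp0.le, ENNReal.ofReal_pow hq]
  ring

end Geometric

theorem parallel_replica_geometric_general
    {Ω : Type*} [MeasurableSpace Ω] (P : Measure Ω)
    (N : ℕ) [NeZero N] (p : ℝ) (hp0 : 0 < p) (hp1 : p ≤ 1) (σ : Fin N → Ω → ℕ)
    (hmeas : ∀ i, Measurable (σ i))
    (hpos : ∀ i ω, 1 ≤ σ i ω)
    (hindep : iIndepFun σ P)
    (hgeom : ∀ i, ∀ k : ℕ, 1 ≤ k →
      P {ω | σ i ω = k} = ENNReal.ofReal (p * (1 - p) ^ (k - 1))) :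
    ∀ k : ℕ,
      P {ω |
          (N * ((Finset.univ.inf' Finset.univ_nonempty fun i => σ i ω) - 1)
            + (1 + sInf {n : ℕ | ∃ h : n < N, σ ⟨n, h⟩ ω
                = Finset.univ.inf' Finset.univ_nonempty fun i => σ i ω})) = k}
        = P {ω | σ 0 ω = k} := by
  intro k
  change P {ω | replicaTime (fun i => σ i ω) = k} = P {ω | σ 0 ω = k}
  cases k with
  | zero =>
    have h0 (ω : Ω) : σ 0 ω ≠ 0 := Nat.one_le_iff_ne_zero.1 (hpos 0 ω)
    simp [replicaTime, h0]
  | succ k =>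
    have hevent : {ω | replicaTime (fun i => σ i ω) = k + 1}
        = ⋂ i, σ i ⁻¹' minPattern (k / N + 1) (k % N) i := by
      ext ω
      simpa using replicaTime_eq_succ_iff (fun i => hpos i ω) k
    rw [hevent, measure_iInter_preimage_minPattern hp0 hp1 hmeas hindep hgeom
      (Nat.mod_lt k (NeZero.pos N)), hgeom 0 (k + 1) k.succ_pos, Nat.add_sub_cancel,
      Nat.div_add_mod]

/-- If `σ 0, ..., σ (N-1)` are i.i.d. geometric random variables with values in `{1, 2, ...}`
and success probability `p`, then `N * (min σ - 1) + (least index achieving the min, counted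
from 1)` has the same law as `σ 0`. -/
theorem parallel_replica_geometric
    {Ω : Type*} [MeasurableSpace Ω] (P : Measure Ω) [IsProbabilityMeasure P]
    (N : ℕ) [NeZero N] (p : ℝ) (hp0 : 0 < p) (hp1 : p ≤ 1) (σ : Fin N → Ω → ℕ)
    (hmeas : ∀ i, Measurable (σ i))
    (hpos : ∀ i ω, 1 ≤ σ i ω)
    (hindep : iIndepFun σ P)
    (hgeom : ∀ i, ∀ k : ℕ, 1 ≤ k →
      P {ω | σ i ω = k} = ENNReal.ofReal (p * (1 - p) ^ (k - 1))) :
    ∀ k : ℕ,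
      P {ω |
          (N * ((Finset.univ.inf' Finset.univ_nonempty fun i => σ i ω) - 1)
            + (1 + sInf {n : ℕ | ∃ h : n < N, σ ⟨n, h⟩ ω
                = Finset.univ.inf' Finset.univ_nonempty fun i => σ i ω})) = k}
        = P {ω | σ 0 ω = k} :=
  parallel_replica_geometric_general P N p hp0 hp1 σ hmeas hpos hindep hgeom
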